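/- arXiv:2411.06593 — 3 statements merged into one kernel-verified Lean document; each statement's English description precedes it below -/
import Mathlib

section
/- Let W ∈ ℝ^{n×q} have full row rank (rank(W) = n < q), T ∈ ℝ^{n×m} have full column rank (rank(T) = m < n), and y ∈ ℝⁿ. Fix i ∈ {1,…,n}; let W_{∼i}, T_{∼i}, y_{∼i} denote the data with the i-th row/entry removed, and assume T_{∼i} has full column rank. Let λ̂^{(∼i)} := P_{(W_{∼i})ᵀ} P⊥_{(W_{∼i})† T_{∼i}} (W_{∼i})† y_{∼i} and τ̂^{(∼i)} := ((W_{∼i})† T_{∼i})† (W_{∼i})† y_{∼i} be the partially regularized leave-i-out OLS estimates. Define the projection P_{W†e_i} = (W† e_i e_iᵀ W†ᵀ)/(e_iᵀ G_W e_i) and W̃_i := P⊥_{W†e_i} W† ∈ ℝ^{q×n}. Then λ̂^{(∼i)} = Wᵀ W̃_iᵀ P⊥_{W̃_i T} W̃_i y. -/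
open Matrix BigOperators

noncomputable section

/-- `B` is the Moore–Penrose pseudoinverse of `A`. -/
def IsMPInv {m n : Type*} [Fintype m] [Fintype n]
    (A : Matrix m n ℝ) (B : Matrix n m ℝ) : Prop :=
  A * B * A = A ∧ B * A * B = B ∧ (A * B)ᵀ = A * B ∧ (B * A)ᵀ = B * A

/-- Remove the `i`-th row of a matrix. -/
def dropRow {n q : ℕ} (A : Matrix (Fin (n + 1)) (Fin q) ℝ) (i : Fin (n + 1)) :
    Matrix (Fin n) (Fin q) ℝ :=
  Matrix.of fun j k => A (i.succAbove j) k

/-- Remove the `i`-th entry of a vector. -/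
def dropEntry {n : ℕ} (v : Fin (n + 1) → ℝ) (i : Fin (n + 1)) : Fin n → ℝ :=
  fun j => v (i.succAbove j)

lemma mul_vecMulVec' {a b c : Type*} [Fintype a] [Fintype b] [Fintype c]
    (M : Matrix a b ℝ) (u : b → ℝ) (v : c → ℝ) :
    M * vecMulVec u v = vecMulVec (M *ᵥ u) v := by
  ext x y
  simp [Matrix.mul_apply, Matrix.vecMulVec_apply, Matrix.mulVec, dotProduct,
    Finset.sum_mul, mul_assoc]

lemma vecMulVec_mul' {a b c : Type*} [Fintype a] [Fintype b] [Fintype c]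
    (u : a → ℝ) (v : b → ℝ) (M : Matrix b c ℝ) :
    vecMulVec u v * M = vecMulVec u (v ᵥ* M) := by
  ext x y
  simp [Matrix.mul_apply, Matrix.vecMulVec_apply, Matrix.vecMul, dotProduct,
    Finset.mul_sum, mul_assoc]

lemma vecMulVec_mulVec' {a b : Type*} [Fintype a] [Fintype b]
    (u : a → ℝ) (v : b → ℝ) (w : b → ℝ) :
    vecMulVec u v *ᵥ w = (v ⬝ᵥ w) • u := by
  ext x
  simp only [Matrix.mulVec, Matrix.vecMulVec_apply, dotProduct, Pi.smul_apply,
    smul_eq_mul, Finset.sum_mul]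
  exact Finset.sum_congr rfl fun i _ => by ring

lemma vecMul_vecMulVec' {a b : Type*} [Fintype a] [Fintype b]
    (w : a → ℝ) (u : a → ℝ) (v : b → ℝ) :
    w ᵥ* vecMulVec u v = (w ⬝ᵥ u) • v := by
  ext x
  simp [Matrix.vecMul, Matrix.vecMulVec_apply, dotProduct, Finset.sum_mul, mul_assoc]

lemma vecMulVec_transpose' {a b : Type*} [Fintype a] [Fintype b]
    (u : a → ℝ) (v : b → ℝ) : (vecMulVec u v)ᵀ = vecMulVec v u := by
  ext x y; simp [Matrix.vecMulVec_apply, mul_comm]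

lemma vecMulVec_zero_left {a b : Type*} [Fintype a] [Fintype b] (v : b → ℝ) :
    vecMulVec (0 : a → ℝ) v = 0 := by
  ext x y; simp [Matrix.vecMulVec_apply]

lemma vecMulVec_smul_right {a b : Type*} [Fintype a] [Fintype b]
    (u : a → ℝ) (c : ℝ) (v : b → ℝ) :
    vecMulVec u (c • v) = c • vecMulVec u v := by
  ext x y; simp [Matrix.vecMulVec_apply]; ring

lemma vecMulVec_mul_vecMulVec' {a b c : Type*} [Fintype a] [Fintype b] [Fintype c]
    (u : a → ℝ) (v w : b → ℝ) (x : c → ℝ) :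
    vecMulVec u v * vecMulVec w x = (v ⬝ᵥ w) • vecMulVec u x := by
  rw [vecMulVec_mul', vecMul_vecMulVec', vecMulVec_smul_right]

lemma mp_tilde {N Q : Type*} [Fintype N] [Fintype Q] [DecidableEq N] [DecidableEq Q]
    {W : Matrix N Q ℝ} {Wp : Matrix Q N ℝ} {u : Q → ℝ} {s : N → ℝ} {c : ℝ}
    (hWp2 : Wp * W * Wp = Wp) (hWpW : (Wp * W)ᵀ = Wp * W)
    (hWWp : W * Wp = 1)
    (hWu : W *ᵥ u = s) (hWpWu : (Wp * W) *ᵥ u = u)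
    (hss : s ⬝ᵥ s = 1) (huu : u ⬝ᵥ u = c) (hc : c ≠ 0) :
    IsMPInv ((1 - vecMulVec s s) * W) ((1 - c⁻¹ • vecMulVec u u) * Wp) := by
  have hDs : (1 - vecMulVec s s) *ᵥ s = 0 := by
    rw [Matrix.sub_mulVec, Matrix.one_mulVec, vecMulVec_mulVec', hss, one_smul, sub_self]
  have hAA : vecMulVec s s * vecMulVec s s = vecMulVec s s := by
    rw [vecMulVec_mul_vecMulVec', hss, one_smul]
  have hDD : (1 - vecMulVec s s) * (1 - vecMulVec s s) = 1 - vecMulVec s s := by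
    rw [Matrix.sub_mul, Matrix.one_mul, Matrix.mul_sub, Matrix.mul_one, hAA]
    abel
  have hDsymm : (1 - vecMulVec s s)ᵀ = 1 - vecMulVec s s := by
    rw [Matrix.transpose_sub, Matrix.transpose_one, vecMulVec_transpose']
  have hPmulu : ∀ (g : Q → ℝ),
      (c⁻¹ • vecMulVec u u) * vecMulVec u g = vecMulVec u g := by
    intro g
    rw [Matrix.smul_mul, vecMulVec_mul_vecMulVec', huu, smul_smul, inv_mul_cancel₀ hc, one_smul]
  have hPP : (c⁻¹ • vecMulVec u u) * (c⁻¹ • vecMulVec u u) = c⁻¹ • vecMulVec u u := by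
    rw [Matrix.mul_smul, hPmulu]
  have hPsymm : (c⁻¹ • vecMulVec u u)ᵀ = c⁻¹ • vecMulVec u u := by
    rw [Matrix.transpose_smul, vecMulVec_transpose']
  have huWpW : u ᵥ* (Wp * W) = u := by
    rw [← hWpW, Matrix.vecMul_transpose, hWpWu]
  have hPWpW : (c⁻¹ • vecMulVec u u) * (Wp * W) = c⁻¹ • vecMulVec u u := by
    rw [Matrix.smul_mul, vecMulVec_mul', huWpW]
  have hWpWP : (Wp * W) * (c⁻¹ • vecMulVec u u) = c⁻¹ • vecMulVec u u := by
    rw [Matrix.mul_smul, mul_vecMulVec', hWpWu]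
  have hWP : W * (c⁻¹ • vecMulVec u u) = c⁻¹ • vecMulVec s u := by
    rw [Matrix.mul_smul, mul_vecMulVec', hWu]
  have hWps : Wp *ᵥ s = u := by
    rw [← hWu, Matrix.mulVec_mulVec, hWpWu]
  have hWB : W * ((1 - c⁻¹ • vecMulVec u u) * Wp) = 1 - c⁻¹ • vecMulVec s (u ᵥ* Wp) := by
    calc W * ((1 - c⁻¹ • vecMulVec u u) * Wp)
        = (W * (1 - c⁻¹ • vecMulVec u u)) * Wp := (Matrix.mul_assoc _ _ _).symm
      _ = (W - c⁻¹ • vecMulVec s u) * Wp := by rw [Matrix.mul_sub, Matrix.mul_one, hWP]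
      _ = W * Wp - (c⁻¹ • vecMulVec s u) * Wp := by rw [Matrix.sub_mul]
      _ = 1 - c⁻¹ • vecMulVec s (u ᵥ* Wp) := by rw [hWWp, Matrix.smul_mul, vecMulVec_mul']
  have hZB : ((1 - vecMulVec s s) * W) * ((1 - c⁻¹ • vecMulVec u u) * Wp)
      = 1 - vecMulVec s s := by
    calc ((1 - vecMulVec s s) * W) * ((1 - c⁻¹ • vecMulVec u u) * Wp)
        = (1 - vecMulVec s s) * (W * ((1 - c⁻¹ • vecMulVec u u) * Wp)) := Matrix.mul_assoc _ _ _
      _ = (1 - vecMulVec s s) * (1 - c⁻¹ • vecMulVec s (u ᵥ* Wp)) := by rw [hWB]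
      _ = (1 - vecMulVec s s) - c⁻¹ • ((1 - vecMulVec s s) * vecMulVec s (u ᵥ* Wp)) := by
          rw [Matrix.mul_sub, Matrix.mul_one, Matrix.mul_smul]
      _ = (1 - vecMulVec s s) - c⁻¹ • vecMulVec ((1 - vecMulVec s s) *ᵥ s) (u ᵥ* Wp) := by
          rw [mul_vecMulVec']
      _ = 1 - vecMulVec s s := by rw [hDs, vecMulVec_zero_left, smul_zero, sub_zero]
  have hWpD : Wp * (1 - vecMulVec s s) = Wp - vecMulVec u s := by
    rw [Matrix.mul_sub, Matrix.mul_one, mul_vecMulVec', hWps]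
  have hBZ : ((1 - c⁻¹ • vecMulVec u u) * Wp) * ((1 - vecMulVec s s) * W)
      = Wp * W - c⁻¹ • vecMulVec u u := by
    have e1 : (Wp - vecMulVec u s) * W = Wp * W - vecMulVec u (s ᵥ* W) := by
      rw [Matrix.sub_mul, vecMulVec_mul']
    calc ((1 - c⁻¹ • vecMulVec u u) * Wp) * ((1 - vecMulVec s s) * W)
        = (1 - c⁻¹ • vecMulVec u u) * (Wp * ((1 - vecMulVec s s) * W)) := Matrix.mul_assoc _ _ _
      _ = (1 - c⁻¹ • vecMulVec u u) * ((Wp * (1 - vecMulVec s s)) * W) := by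
          rw [Matrix.mul_assoc]
      _ = (1 - c⁻¹ • vecMulVec u u) * (Wp * W - vecMulVec u (s ᵥ* W)) := by
          rw [hWpD, e1]
      _ = Wp * W - vecMulVec u (s ᵥ* W)
          - ((c⁻¹ • vecMulVec u u) * (Wp * W) - (c⁻¹ • vecMulVec u u) * vecMulVec u (s ᵥ* W)) := by
          rw [Matrix.sub_mul, Matrix.one_mul, Matrix.mul_sub]
      _ = Wp * W - vecMulVec u (s ᵥ* W) - (c⁻¹ • vecMulVec u u - vecMulVec u (s ᵥ* W)) := by
          rw [hPWpW, hPmulu]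
      _ = Wp * W - c⁻¹ • vecMulVec u u := by abel
  refine ⟨?_, ?_, ?_, ?_⟩
  · rw [hZB, ← Matrix.mul_assoc, hDD]
  · rw [hBZ]
    have e2 : (Wp * W - c⁻¹ • vecMulVec u u) * (1 - c⁻¹ • vecMulVec u u)
        = Wp * W - c⁻¹ • vecMulVec u u := by
      rw [Matrix.mul_sub, Matrix.mul_one, Matrix.sub_mul, hWpWP, hPP]
      abel
    calc (Wp * W - c⁻¹ • vecMulVec u u) * ((1 - c⁻¹ • vecMulVec u u) * Wp)
        = ((Wp * W - c⁻¹ • vecMulVec u u) * (1 - c⁻¹ • vecMulVec u u)) * Wp :=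
          (Matrix.mul_assoc _ _ _).symm
      _ = (Wp * W - c⁻¹ • vecMulVec u u) * Wp := by rw [e2]
      _ = Wp * W * Wp - (c⁻¹ • vecMulVec u u) * Wp := by rw [Matrix.sub_mul]
      _ = (1 - c⁻¹ • vecMulVec u u) * Wp := by rw [hWp2, Matrix.sub_mul, Matrix.one_mul]
  · rw [hZB, hDsymm]
  · rw [hBZ, Matrix.transpose_sub, hWpW, hPsymm]

def selE {n : ℕ} (i : Fin (n + 1)) : Matrix (Fin n) (Fin (n + 1)) ℝ :=
  Matrix.of fun j k => if k = i.succAbove j then 1 else 0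

lemma selE_mul {n q : ℕ} (i : Fin (n + 1)) (A : Matrix (Fin (n + 1)) (Fin q) ℝ) :
    selE i * A = dropRow A i := by
  ext j k
  simp [selE, dropRow, Matrix.mul_apply]

lemma selE_mulVec {n : ℕ} (i : Fin (n + 1)) (v : Fin (n + 1) → ℝ) :
    selE i *ᵥ v = dropEntry v i := by
  ext j
  simp [selE, dropEntry, Matrix.mulVec, dotProduct]

lemma selE_mul_transpose {n : ℕ} (i : Fin (n + 1)) :
    selE i * (selE i)ᵀ = 1 := by
  ext j j'
  simp only [Matrix.mul_apply, selE, Matrix.transpose_apply, Matrix.of_apply,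
    Matrix.one_apply, ite_mul, one_mul, zero_mul]
  rw [Finset.sum_ite_eq' Finset.univ (i.succAbove j)]
  simp [Fin.succAbove_right_inj]

lemma transpose_selE_mul {n : ℕ} (i : Fin (n + 1)) :
    (selE i)ᵀ * selE i =
      1 - vecMulVec (Pi.single i 1) (Pi.single i (1:ℝ)) := by
  ext k l
  simp only [Matrix.mul_apply, selE, Matrix.transpose_apply, Matrix.of_apply,
    Matrix.sub_apply, Matrix.one_apply, Matrix.vecMulVec_apply, Pi.single_apply]
  by_cases hk : k = i
  · subst hk
    rw [Finset.sum_eq_zero]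
    · by_cases hl : l = k
      · simp [hl]
      · rw [if_neg (fun h : k = l => hl h.symm), if_pos rfl, if_neg hl]
        ring
    · intro j _
      rw [if_neg (Fin.ne_succAbove k j)]
      ring
  · obtain ⟨j₀, hj₀⟩ := Fin.exists_succAbove_eq (Ne.symm (Ne.symm hk))
    rw [Finset.sum_eq_single j₀]
    · simp [hj₀.symm, eq_comm, hk, Fin.ne_succAbove i j₀]
    · intro j _ hj
      rw [if_neg]
      · ring
      · intro hkj
        exact hj (Fin.succAbove_right_injective (by rw [← hkj, hj₀]))
    · intro h; exact absurd (Finset.mem_univ j₀) h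

lemma mp_unique {k l : Type*} [Fintype k] [Fintype l]
    {A : Matrix k l ℝ} {B C : Matrix l k ℝ}
    (hB : IsMPInv A B) (hC : IsMPInv A C) : B = C := by
  obtain ⟨hB1, hB2, hB3, hB4⟩ := hB
  obtain ⟨hC1, hC2, hC3, hC4⟩ := hC
  have h1 : A * B = A * B * (A * C) := by
    calc A * B = (A * B)ᵀ := hB3.symm
      _ = Bᵀ * Aᵀ := Matrix.transpose_mul _ _
      _ = Bᵀ * (A * C * A)ᵀ := by rw [hC1]
      _ = Bᵀ * (Aᵀ * (A * C)ᵀ) := by rw [Matrix.transpose_mul]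
      _ = Bᵀ * Aᵀ * (A * C)ᵀ := (Matrix.mul_assoc _ _ _).symm
      _ = (A * B)ᵀ * (A * C)ᵀ := by rw [Matrix.transpose_mul A B]
      _ = A * B * (A * C) := by rw [hB3, hC3]
  have hBeq : B = B * (A * C) := by
    calc B = B * A * B := hB2.symm
      _ = B * (A * B) := Matrix.mul_assoc _ _ _
      _ = B * (A * B * (A * C)) := by rw [← h1]
      _ = B * A * B * (A * C) := by simp only [Matrix.mul_assoc]
      _ = B * (A * C) := by rw [hB2]
  have h2 : C * A = B * A * (C * A) := by
    calc C * A = (C * A)ᵀ := hC4.symm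
      _ = Aᵀ * Cᵀ := Matrix.transpose_mul _ _
      _ = (A * (B * A))ᵀ * Cᵀ := by rw [← Matrix.mul_assoc, hB1]
      _ = (B * A)ᵀ * Aᵀ * Cᵀ := by rw [Matrix.transpose_mul A (B*A)]
      _ = B * A * (Aᵀ * Cᵀ) := by rw [hB4, Matrix.mul_assoc]
      _ = B * A * (C * A)ᵀ := by rw [Matrix.transpose_mul]
      _ = B * A * (C * A) := by rw [hC4]
  have hCeq : C = B * (A * C) := by
    calc C = C * A * C := hC2.symm
      _ = B * A * (C * A) * C := by rw [← h2]
      _ = B * A * (C * A * C) := by simp only [Matrix.mul_assoc]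
      _ = B * A * C := by rw [hC2]
      _ = B * (A * C) := Matrix.mul_assoc _ _ _
  exact hBeq.trans hCeq.symm

lemma surj_of_rank_eq {r s : ℕ} {A : Matrix (Fin r) (Fin s) ℝ} (h : A.rank = r) :
    Function.Surjective A.mulVecLin := by
  rw [← LinearMap.range_eq_top]
  apply Submodule.eq_top_of_finrank_eq
  rw [Module.finrank_pi]
  simpa [Matrix.rank] using h

lemma mulVec_cancel {r s : ℕ} {A : Matrix (Fin r) (Fin s) ℝ}
    (hA : Function.Surjective A.mulVecLin) {t : Type*} [Fintype t]
    {X Y : Matrix t (Fin r) ℝ} (h : X * A = Y * A) : X = Y := by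
  have hv : ∀ v, X *ᵥ v = Y *ᵥ v := by
    intro v
    obtain ⟨w, hw⟩ := hA v
    have hw' : A *ᵥ w = v := hw
    rw [← hw', Matrix.mulVec_mulVec, Matrix.mulVec_mulVec, h]
  ext a b
  have := congrFun (hv (Pi.single b 1)) a
  simpa [Matrix.mulVec_single] using this

theorem loo_lambda_formula
    {n q m : ℕ}
    (W : Matrix (Fin (n + 1)) (Fin q) ℝ) (T : Matrix (Fin (n + 1)) (Fin m) ℝ)
    (y : Fin (n + 1) → ℝ)
    (hW : W.rank = n + 1) (hnq : n + 1 < q)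
    (hT : T.rank = m) (hmn : m < n + 1)
    (i : Fin (n + 1))
    (hTd : (dropRow T i).rank = m)
    (Wp : Matrix (Fin q) (Fin (n + 1)) ℝ) (hWp : IsMPInv W Wp)
    (GW : Matrix (Fin (n + 1)) (Fin (n + 1)) ℝ) (hGW : IsMPInv (W * Wᵀ) GW)
    (Wdp : Matrix (Fin q) (Fin n) ℝ) (hWdp : IsMPInv (dropRow W i) Wdp)
    (L : Matrix (Fin m) (Fin q) ℝ) (hL : IsMPInv (Wdp * dropRow T i) L)
    -- λ̂^{(∼i)} = P_{(W_{∼i})ᵀ} P⊥_{(W_{∼i})† T_{∼i}} (W_{∼i})† y_{∼i},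
    -- where P_{(W_{∼i})ᵀ} = (W_{∼i})ᵀ ((W_{∼i})ᵀ)† = (W_{∼i})ᵀ ((W_{∼i})†)ᵀ
    (lam : Fin q → ℝ)
    (hlam : lam = ((dropRow W i)ᵀ * Wdpᵀ) *ᵥ
      (((1 : Matrix (Fin q) (Fin q) ℝ) - (Wdp * dropRow T i) * L) *ᵥ
        (Wdp *ᵥ dropEntry y i)))
    -- `W̃_i = P⊥_{W†e_i} W†` with `P_{W†e_i} = (W† e_i e_iᵀ W†ᵀ)/(e_iᵀ G_W e_i)`
    (Wt : Matrix (Fin q) (Fin (n + 1)) ℝ)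
    (hWt : Wt = ((1 : Matrix (Fin q) (Fin q) ℝ)
      - (GW i i)⁻¹ • vecMulVec (Wpᵀ i) (Wpᵀ i)) * Wp)
    (K : Matrix (Fin m) (Fin q) ℝ) (hK : IsMPInv (Wt * T) K) :
    lam = (Wᵀ * Wtᵀ) *ᵥ
      (((1 : Matrix (Fin q) (Fin q) ℝ) - (Wt * T) * K) *ᵥ (Wt *ᵥ y)) := by
  classical
  -- full row rank consequences
  have hWsurj : Function.Surjective W.mulVecLin := surj_of_rank_eq hW
  have hMsurj : Function.Surjective (W * Wᵀ).mulVecLin :=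
    surj_of_rank_eq (by rw [Matrix.rank_self_mul_transpose]; exact hW)
  have hWWp : W * Wp = 1 := mulVec_cancel hWsurj (by rw [Matrix.one_mul]; exact hWp.1)
  have hMGW : (W * Wᵀ) * GW = 1 := mulVec_cancel hMsurj (by rw [Matrix.one_mul]; exact hGW.1)
  have hMsymm : (W * Wᵀ)ᵀ = W * Wᵀ := by rw [Matrix.transpose_mul, Matrix.transpose_transpose]
  have hGWtM : GWᵀ * (W * Wᵀ) = 1 := by
    calc GWᵀ * (W * Wᵀ) = GWᵀ * (W * Wᵀ)ᵀ := by rw [hMsymm]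
      _ = ((W * Wᵀ) * GW)ᵀ := (Matrix.transpose_mul _ _).symm
      _ = 1 := by rw [hMGW, Matrix.transpose_one]
  have hGWsymm : GWᵀ = GW := by
    calc GWᵀ = GWᵀ * 1 := (Matrix.mul_one _).symm
      _ = GWᵀ * ((W * Wᵀ) * GW) := by rw [hMGW]
      _ = GWᵀ * (W * Wᵀ) * GW := (Matrix.mul_assoc _ _ _).symm
      _ = 1 * GW := by rw [hGWtM]
      _ = GW := Matrix.one_mul _
  have hWWtGW : W * (Wᵀ * GW) = 1 := by rw [← Matrix.mul_assoc]; exact hMGW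
  have hWpIs : IsMPInv W (Wᵀ * GW) := by
    refine ⟨?_, ?_, ?_, ?_⟩
    · rw [hWWtGW, Matrix.one_mul]
    · rw [Matrix.mul_assoc, hWWtGW, Matrix.mul_one]
    · rw [hWWtGW, Matrix.transpose_one]
    · rw [Matrix.transpose_mul, Matrix.transpose_mul, Matrix.transpose_transpose,
        hGWsymm, Matrix.mul_assoc]
  have hWpeq : Wp = Wᵀ * GW := mp_unique hWp hWpIs
  -- the vectors s and u
  set s : Fin (n + 1) → ℝ := Pi.single i 1 with hs
  set u : Fin q → ℝ := Wp *ᵥ s with hudef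
  have hu : Wpᵀ i = u := by
    ext k
    simp [hudef, hs, Matrix.mulVec_single, Matrix.transpose_apply]
  have hWu : W *ᵥ u = s := by
    rw [hudef, Matrix.mulVec_mulVec, hWWp, Matrix.one_mulVec]
  have hWpWu : (Wp * W) *ᵥ u = u := by
    rw [hudef, Matrix.mulVec_mulVec, hWp.2.1]
  have hWpTWp : Wpᵀ * Wp = GW := by
    rw [hWpeq, Matrix.transpose_mul, Matrix.transpose_transpose, hGWsymm,
      Matrix.mul_assoc, hWWtGW, Matrix.mul_one]
  have hcuu : u ⬝ᵥ u = GW i i := by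
    rw [← hWpTWp, ← hu]
    simp [Matrix.mul_apply, dotProduct, Matrix.transpose_apply]
  have hss : s ⬝ᵥ s = 1 := by
    simp [hs, dotProduct, Pi.single_apply]
  have hc0 : GW i i ≠ 0 := by
    intro h0
    have hu0 : u = 0 := dotProduct_self_eq_zero.mp (by rw [hcuu, h0])
    have h1 : s i = (0 : ℝ) := by
      rw [← hWu, hu0, Matrix.mulVec_zero]
      rfl
    rw [hs] at h1
    simp at h1
  -- Wt is the MP inverse of (1 - vecMulVec s s) * W
  have hMPZ : IsMPInv ((1 - vecMulVec s s) * W) Wt := by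
    rw [hWt, hu]
    exact mp_tilde hWp.2.1 hWp.2.2.2 hWWp hWu hWpWu hss hcuu hc0
  -- so is Wdp * selE i, for the same matrix written via selE
  have hZeq : (selE i)ᵀ * dropRow W i = (1 - vecMulVec s s) * W := by
    rw [← selE_mul i W, ← Matrix.mul_assoc, transpose_selE_mul]
  have hMPZ2 : IsMPInv ((selE i)ᵀ * dropRow W i) Wt := by rw [hZeq]; exact hMPZ
  have hmid : (Wdp * selE i) * ((selE i)ᵀ * dropRow W i) = Wdp * dropRow W i := by
    calc (Wdp * selE i) * ((selE i)ᵀ * dropRow W i)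
        = Wdp * (selE i * ((selE i)ᵀ * dropRow W i)) := Matrix.mul_assoc _ _ _
      _ = Wdp * ((selE i * (selE i)ᵀ) * dropRow W i) := by rw [Matrix.mul_assoc]
      _ = Wdp * dropRow W i := by rw [selE_mul_transpose, Matrix.one_mul]
  have hMPZ3 : IsMPInv ((selE i)ᵀ * dropRow W i) (Wdp * selE i) := by
    refine ⟨?_, ?_, ?_, ?_⟩
    · calc (selE i)ᵀ * dropRow W i * (Wdp * selE i) * ((selE i)ᵀ * dropRow W i)
          = ((selE i)ᵀ * dropRow W i) * ((Wdp * selE i) * ((selE i)ᵀ * dropRow W i)) :=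
            Matrix.mul_assoc _ _ _
        _ = ((selE i)ᵀ * dropRow W i) * (Wdp * dropRow W i) := by rw [hmid]
        _ = (selE i)ᵀ * (dropRow W i * (Wdp * dropRow W i)) := Matrix.mul_assoc _ _ _
        _ = (selE i)ᵀ * (dropRow W i * Wdp * dropRow W i) := by rw [← Matrix.mul_assoc (dropRow W i)]
        _ = (selE i)ᵀ * dropRow W i := by rw [hWdp.1]
    · calc Wdp * selE i * ((selE i)ᵀ * dropRow W i) * (Wdp * selE i)
          = (Wdp * dropRow W i) * (Wdp * selE i) := by rw [hmid]
        _ = ((Wdp * dropRow W i) * Wdp) * selE i := (Matrix.mul_assoc _ _ _).symm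
        _ = Wdp * selE i := by rw [hWdp.2.1]
    · have e3 : (selE i)ᵀ * dropRow W i * (Wdp * selE i)
          = (selE i)ᵀ * ((dropRow W i * Wdp) * selE i) := by
        simp only [Matrix.mul_assoc]
      rw [e3, Matrix.transpose_mul, Matrix.transpose_mul, hWdp.2.2.1,
        Matrix.transpose_transpose]
      simp only [Matrix.mul_assoc]
    · rw [hmid, hWdp.2.2.2]
  have hWteq : Wt = Wdp * selE i := mp_unique hMPZ2 hMPZ3
  -- final assembly
  have hWtT : Wt * T = Wdp * dropRow T i := by
    rw [hWteq, Matrix.mul_assoc, selE_mul]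
  have hK' : IsMPInv (Wdp * dropRow T i) K := by rw [← hWtT]; exact hK
  have hKL : K = L := mp_unique hK' hL
  have hWty : Wt *ᵥ y = Wdp *ᵥ dropEntry y i := by
    rw [hWteq, ← Matrix.mulVec_mulVec, selE_mulVec]
  have hWWtT : Wᵀ * Wtᵀ = (dropRow W i)ᵀ * Wdpᵀ := by
    rw [hWteq, Matrix.transpose_mul, ← Matrix.mul_assoc, ← Matrix.transpose_mul, selE_mul]
  rw [hlam, hWWtT, hWtT, hKL, hWty]
end
end

section
/- Let W ∈ ℝ^{n×q} have full row rank (rank(W) = n < q), T ∈ ℝ^{n×m} have full column rank (rank(T) = m < n), and y ∈ ℝⁿ. Fix i ∈ {1,…,n}; let W_{∼i}, T_{∼i}, y_{∼i} denote the data with the i-th row/entry removed, and assume T_{∼i} has full column rank. Let τ̂^{(∼i)} := ((W_{∼i})† T_{∼i})† (W_{∼i})† y_{∼i} be the partially regularized leave-i-out OLS estimate of the unpenalized coefficients. Define W̃_i := P⊥_{W†e_i} W†, where P_{W†e_i} = (W† e_i e_iᵀ W†ᵀ)/(e_iᵀ G_W e_i). Then τ̂^{(∼i)} = (W̃_i T)†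 W̃_i y. -/
open Matrix BigOperators

noncomputable section

/-!
Let `D` be the matrix deleting row `i`, so that `W_{∼i} = D W`, and let `u = W† e_i`.
Full row rank gives `W W† = 1`, hence `W u = e_i`; as `D e_i = 0`, this yields `D W P⊥_u = D W`.
Then `W̃_i Dᵀ` is a right inverse of `D W`, and `W̃_i Dᵀ D W = P⊥_u W† W` is symmetric because
`P⊥_u` commutes with the symmetric `W† W`, which fixes `u`; so `W̃_i Dᵀ = (W_{∼i})†`.
Since `W̃_i e_i = 0`, also `W̃_i = (W_{∼i})† D`, which turns `W̃_i T` and `W̃_i y` into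
`(W_{∼i})† T_{∼i}` and `(W_{∼i})† y_{∼i}`. Finally `e_iᵀ G_W e_i = ‖u‖²` because
`(W Wᵀ)† = W†ᵀ W†`.
-/

namespace IsMPInv

variable {k l : Type*} [Fintype k] [Fintype l] {A : Matrix k l ℝ} {B C : Matrix l k ℝ}

theorem unique (hB : IsMPInv A B) (hC : IsMPInv A C) : B = C := by
  obtain ⟨hB₁, hB₂, hB₃, hB₄⟩ := hB
  obtain ⟨hC₁, hC₂, hC₃, hC₄⟩ := hC
  have hAt : Aᵀ = Aᵀ * Cᵀ * Aᵀ := by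
    rw [← transpose_mul, ← transpose_mul, ← Matrix.mul_assoc, hC₁]
  have hAB : A * B = A * C := by
    calc A * B = Bᵀ * (Aᵀ * Cᵀ * Aᵀ) := by rw [← hAt, ← transpose_mul, hB₃]
    _ = (A * B) * (A * C) := by
          rw [← hC₃, ← hB₃, transpose_mul, transpose_mul]
          simp only [Matrix.mul_assoc]
    _ = A * C := by rw [← Matrix.mul_assoc, hB₁]
  have hBA : B * A = C * A := by
    calc B * A = (Aᵀ * Cᵀ * Aᵀ) * Bᵀ := by rw [← hAt, ← transpose_mul, hB₄]
    _ = (C * A) * (B * A) := by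
          rw [← hC₄, ← hB₄, transpose_mul, transpose_mul]
          simp only [Matrix.mul_assoc]
    _ = C * A := by rw [Matrix.mul_assoc, ← Matrix.mul_assoc A, hB₁]
  calc B = C * A * B := by rw [← hBA, hB₂]
  _ = C := by rw [Matrix.mul_assoc, hAB, ← Matrix.mul_assoc, hC₂]

theorem mul_transpose_self (hB : IsMPInv A B) : IsMPInv (A * Aᵀ) (Bᵀ * B) := by
  obtain ⟨hB₁, hB₂, hB₃, hB₄⟩ := hB
  have hBAAt : B * A * Aᵀ = Aᵀ := by rw [← hB₄, ← transpose_mul, ← Matrix.mul_assoc, hB₁]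
  have hAAtBt : A * Aᵀ * Bᵀ = A := by
    rw [Matrix.mul_assoc, ← transpose_mul, hB₄, ← Matrix.mul_assoc, hB₁]
  have hAAtBtB : A * Aᵀ * (Bᵀ * B) = A * B := by rw [← Matrix.mul_assoc, hAAtBt]
  have hBtBAAt : Bᵀ * B * (A * Aᵀ) = A * B := by
    rw [Matrix.mul_assoc, ← Matrix.mul_assoc B, hBAAt, ← transpose_mul, hB₃]
  refine ⟨?_, ?_, ?_, ?_⟩
  · rw [hAAtBtB, Matrix.mul_assoc, ← Matrix.mul_assoc B, hBAAt]
  · rw [hBtBAAt, ← hB₃, transpose_mul, ← Matrix.mul_assoc, ← transpose_mul, ← transpose_mul,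
      ← Matrix.mul_assoc, hB₂]
  · rw [hAAtBtB, hB₃]
  · rw [hBtBAAt, hB₃]

theorem of_mul_eq_one [DecidableEq k] (hAB : A * B = 1) (hBA : (B * A)ᵀ = B * A) :
    IsMPInv A B :=
  ⟨by rw [hAB, Matrix.one_mul], by rw [Matrix.mul_assoc, hAB, Matrix.mul_one],
    by rw [hAB, transpose_one], hBA⟩

theorem mul_eq_one_of_rank_eq [DecidableEq k] (hB : IsMPInv A B)
    (hA : A.rank = Fintype.card k) : A * B = 1 := by
  have hrange : LinearMap.range A.mulVecLin = ⊤ :=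
    Submodule.eq_top_of_finrank_eq (by rw [← Matrix.rank, hA, Module.finrank_fintype_fun_eq_card])
  obtain ⟨C, hC⟩ := mulVec_surjective_iff_exists_right_inverse.mp
    (LinearMap.range_eq_top.mp hrange)
  rw [← Matrix.mul_one (A * B), ← hC, ← Matrix.mul_assoc, hB.1]

end IsMPInv

section OrthogonalComplement

variable {l : Type*} [Fintype l] [DecidableEq l]

/-- `P⊥_u` of the paper; for `u = 0` it is `1`, as `(0 : ℝ)⁻¹ = 0`. -/
def projOrthCompl (u : l → ℝ) : Matrix l l ℝ := 1 - (u ⬝ᵥ u)⁻¹ • vecMulVec u u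

theorem projOrthCompl_mulVec_self (u : l → ℝ) : projOrthCompl u *ᵥ u = 0 := by
  rcases eq_or_ne (u ⬝ᵥ u) 0 with hu | hu
  · rw [dotProduct_self_eq_zero.mp hu, mulVec_zero]
  · rw [projOrthCompl, sub_mulVec, one_mulVec, smul_mulVec, vecMulVec_mulVec, op_smul_eq_smul,
      smul_smul, inv_mul_cancel₀ hu, one_smul, sub_self]

theorem transpose_projOrthCompl (u : l → ℝ) : (projOrthCompl u)ᵀ = projOrthCompl u := by
  simp [projOrthCompl]

theorem projOrthCompl_mul_comm {N : Matrix l l ℝ} (u : l → ℝ) (hN : Nᵀ = N) (hNu : N *ᵥ u = u) :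
    projOrthCompl u * N = N * projOrthCompl u := by
  have huN : u ᵥ* N = u := by rw [← mulVec_transpose, hN, hNu]
  simp only [projOrthCompl, Matrix.sub_mul, Matrix.mul_sub, Matrix.one_mul, Matrix.mul_one,
    Matrix.smul_mul, Matrix.mul_smul, vecMulVec_mul, mul_vecMulVec, huN, hNu]

end OrthogonalComplement

section DropRow

variable {n q : ℕ} (i : Fin (n + 1))

def dropMat : Matrix (Fin n) (Fin (n + 1)) ℝ :=
  (1 : Matrix (Fin (n + 1)) (Fin (n + 1)) ℝ).submatrix i.succAbove id

theorem dropMat_mul (A : Matrix (Fin (n + 1)) (Fin q) ℝ) : dropMat i * A = dropRow A i := by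
  ext j k
  simp [dropMat, dropRow, mul_apply, one_apply]

theorem dropMat_mulVec (v : Fin (n + 1) → ℝ) : dropMat i *ᵥ v = dropEntry v i := by
  ext j
  simp [dropMat, dropEntry, mulVec, dotProduct, one_apply]

theorem dropMat_mulVec_single : dropMat i *ᵥ Pi.single i 1 = 0 := by
  rw [dropMat_mulVec]
  ext j
  simp [dropEntry, Fin.succAbove_ne]

theorem dropMat_mul_transpose : dropMat i * (dropMat i)ᵀ = 1 := by
  rw [dropMat, transpose_submatrix, transpose_one, ← submatrix_mul _ _ _ _ _ Function.bijective_id,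
    Matrix.mul_one, submatrix_one _ Fin.succAbove_right_injective]

theorem transpose_dropMat_mul_dropMat :
    (dropMat i)ᵀ * dropMat i = 1 - vecMulVec (Pi.single i 1) (Pi.single i 1) := by
  ext k k'
  induction k using Fin.succAboveCases i with
  | x => simp [dropMat, mul_apply, one_apply, vecMulVec_apply, Pi.single_apply, eq_comm]
  | p j =>
    simp only [dropMat, transpose_submatrix, mul_apply, submatrix_apply, transpose_one]
    rw [Finset.sum_eq_single j (fun j' _ hj' => by simp [one_apply, Ne.symm hj']) (by simp)]
    simp [one_apply, vecMulVec_apply, Fin.succAbove_ne]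

theorem mul_transpose_dropMat_mul_dropMat {l : Type*} {M : Matrix l (Fin (n + 1)) ℝ}
    (hM : M *ᵥ Pi.single i 1 = 0) : M * (dropMat i)ᵀ * dropMat i = M := by
  rw [Matrix.mul_assoc, transpose_dropMat_mul_dropMat, Matrix.mul_sub, Matrix.mul_one,
    mul_vecMulVec, hM, zero_vecMulVec, sub_zero]

end DropRow

theorem mulVec_single_one_eq_transpose_apply {l k : Type*} [Fintype k] [DecidableEq k]
    (B : Matrix l k ℝ) (i : k) : B *ᵥ Pi.single i 1 = Bᵀ i := by
  ext; simp

theorem isMPInv_dropRow {n q : ℕ} {A : Matrix (Fin (n + 1)) (Fin q) ℝ}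
    {B : Matrix (Fin q) (Fin (n + 1)) ℝ} (hB : IsMPInv A B) (hAB : A * B = 1)
    (i : Fin (n + 1)) :
    IsMPInv (dropRow A i) (projOrthCompl (Bᵀ i) * B * (dropMat i)ᵀ) := by
  have hBe := mulVec_single_one_eq_transpose_apply B i
  have hAu : A *ᵥ Bᵀ i = Pi.single i 1 := by rw [← hBe, mulVec_mulVec, hAB, one_mulVec]
  have hPBe : (projOrthCompl (Bᵀ i) * B) *ᵥ Pi.single i 1 = 0 := by
    rw [← mulVec_mulVec, hBe, projOrthCompl_mulVec_self]
  -- `A * projOrthCompl (Bᵀ i)` differs from `A` only in row `i`, since `A (Bᵀ i) = e_i`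
  have hDAP : dropMat i * A * projOrthCompl (Bᵀ i) = dropMat i * A := by
    rw [Matrix.mul_assoc, projOrthCompl, Matrix.mul_sub, Matrix.mul_one, Matrix.mul_smul,
      mul_vecMulVec, hAu, Matrix.mul_sub, Matrix.mul_smul, mul_vecMulVec, dropMat_mulVec_single,
      zero_vecMulVec, smul_zero, sub_zero]
  have hBAu : (B * A) *ᵥ Bᵀ i = Bᵀ i := by rw [← mulVec_mulVec, hAu, hBe]
  refine IsMPInv.of_mul_eq_one ?_ ?_
  · rw [← dropMat_mul, ← Matrix.mul_assoc, ← Matrix.mul_assoc, hDAP, Matrix.mul_assoc _ A,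
      hAB, Matrix.mul_one, dropMat_mul_transpose]
  · rw [← dropMat_mul, ← Matrix.mul_assoc, mul_transpose_dropMat_mul_dropMat i hPBe,
      Matrix.mul_assoc, transpose_mul, transpose_projOrthCompl, hB.2.2.2,
      projOrthCompl_mul_comm _ hB.2.2.2 hBAu]

theorem IsMPInv.mul_dropMat_eq {n q : ℕ} {A : Matrix (Fin (n + 1)) (Fin q) ℝ}
    {B : Matrix (Fin q) (Fin (n + 1)) ℝ} {C : Matrix (Fin q) (Fin n) ℝ} {i : Fin (n + 1)}
    (hC : IsMPInv (dropRow A i) C) (hB : IsMPInv A B) (hAB : A * B = 1) :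
    C * dropMat i = projOrthCompl (Bᵀ i) * B := by
  rw [hC.unique (isMPInv_dropRow hB hAB i), mul_transpose_dropMat_mul_dropMat]
  rw [← mulVec_mulVec, mulVec_single_one_eq_transpose_apply, projOrthCompl_mulVec_self]

theorem loo_tau_formula_general
    {n q m : ℕ}
    (W : Matrix (Fin (n + 1)) (Fin q) ℝ) (T : Matrix (Fin (n + 1)) (Fin m) ℝ)
    (y : Fin (n + 1) → ℝ)
    (hW : W.rank = n + 1)
    (i : Fin (n + 1))
    (Wp : Matrix (Fin q) (Fin (n + 1)) ℝ) (hWp : IsMPInv W Wp)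
    (GW : Matrix (Fin (n + 1)) (Fin (n + 1)) ℝ) (hGW : IsMPInv (W * Wᵀ) GW)
    (Wdp : Matrix (Fin q) (Fin n) ℝ) (hWdp : IsMPInv (dropRow W i) Wdp)
    (L : Matrix (Fin m) (Fin q) ℝ) (hL : IsMPInv (Wdp * dropRow T i) L)
    -- τ̂^{(∼i)} = ((W_{∼i})† T_{∼i})† (W_{∼i})† y_{∼i}
    (tau : Fin m → ℝ) (htau : tau = L *ᵥ (Wdp *ᵥ dropEntry y i))
    -- `W̃_i = P⊥_{W†e_i} W†` with `P_{W†e_i} = (W† e_i e_iᵀ W†ᵀ)/(e_iᵀ G_W e_i)`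
    (Wt : Matrix (Fin q) (Fin (n + 1)) ℝ)
    (hWt : Wt = ((1 : Matrix (Fin q) (Fin q) ℝ)
      - (GW i i)⁻¹ • vecMulVec (Wpᵀ i) (Wpᵀ i)) * Wp)
    (K : Matrix (Fin m) (Fin q) ℝ) (hK : IsMPInv (Wt * T) K) :
    tau = K *ᵥ (Wt *ᵥ y) := by
  have hWWp : W * Wp = 1 := hWp.mul_eq_one_of_rank_eq (by rw [hW, Fintype.card_fin])
  have hGii : GW i i = Wpᵀ i ⬝ᵥ Wpᵀ i := by
    rw [hGW.unique hWp.mul_transpose_self, mul_apply]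
    rfl
  have hWt_eq : Wt = Wdp * dropMat i := by
    rw [hWdp.mul_dropMat_eq hWp hWWp, hWt, hGii]
    rfl
  have hWtT : Wt * T = Wdp * dropRow T i := by rw [hWt_eq, Matrix.mul_assoc, dropMat_mul]
  have hWty : Wt *ᵥ y = Wdp *ᵥ dropEntry y i := by
    rw [hWt_eq, ← mulVec_mulVec, dropMat_mulVec]
  rw [htau, hWty, hL.unique (hWtT ▸ hK)]

theorem loo_tau_formula
    {n q m : ℕ}
    (W : Matrix (Fin (n + 1)) (Fin q) ℝ) (T : Matrix (Fin (n + 1)) (Fin m) ℝ)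
    (y : Fin (n + 1) → ℝ)
    (hW : W.rank = n + 1) (hnq : n + 1 < q)
    (hT : T.rank = m) (hmn : m < n + 1)
    (i : Fin (n + 1))
    (hTd : (dropRow T i).rank = m)
    (Wp : Matrix (Fin q) (Fin (n + 1)) ℝ) (hWp : IsMPInv W Wp)
    (GW : Matrix (Fin (n + 1)) (Fin (n + 1)) ℝ) (hGW : IsMPInv (W * Wᵀ) GW)
    (Wdp : Matrix (Fin q) (Fin n) ℝ) (hWdp : IsMPInv (dropRow W i) Wdp)
    (L : Matrix (Fin m) (Fin q) ℝ) (hL : IsMPInv (Wdp * dropRow T i) L)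
    -- τ̂^{(∼i)} = ((W_{∼i})† T_{∼i})† (W_{∼i})† y_{∼i}
    (tau : Fin m → ℝ) (htau : tau = L *ᵥ (Wdp *ᵥ dropEntry y i))
    -- `W̃_i = P⊥_{W†e_i} W†` with `P_{W†e_i} = (W† e_i e_iᵀ W†ᵀ)/(e_iᵀ G_W e_i)`
    (Wt : Matrix (Fin q) (Fin (n + 1)) ℝ)
    (hWt : Wt = ((1 : Matrix (Fin q) (Fin q) ℝ)
      - (GW i i)⁻¹ • vecMulVec (Wpᵀ i) (Wpᵀ i)) * Wp)
    (K : Matrix (Fin m) (Fin q) ℝ) (hK : IsMPInv (Wt * T) K) :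
    tau = K *ᵥ (Wt *ᵥ y) :=
  loo_tau_formula_general W T y hW i Wp hWp GW hGW Wdp hWdp L hL tau htau Wt hWt K hK
end
end

section
/- Let W ∈ ℝ^{n×q} have full row rank (rank(W) = n < q) and T ∈ ℝ^{n×m} have full column rank (rank(T) = m, 0 < m < n). Assume the Gauss–Markov model: y = Xβ + ε with X = [W, T] fixed, β ∈ ℝᵖ deterministic, and ε a random vector with E[ε] = 0 and E[ε εᵀ] = σ² I_n. Let β̂_W := (P⊥_T W)† y be the partially regularized penalized-block estimate and define σ̂²_W := ‖y − P⊥_T W β̂_W‖₂² / rank(T). Then E[σ̂²_W] = σ² + ‖P_T E[y]‖₂² / rank(T), where E[y] = Xβ. -/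
open Matrix BigOperators MeasureTheory

noncomputable section

/-!
The residual `y − P⊥_T W β̂_W` equals `P_T y`: since `W` is onto, the column space of `P⊥_T W`
is that of `P⊥_T`, so `(P⊥_T W)(P⊥_T W)† = P⊥_T`. Hence the residual is `P_T E[y] + P_T ε`, and
for white noise `E‖a + P ε‖² = ‖a‖² + σ² tr(P Pᵀ)`. For the orthogonal projection `P = P_T` this
trace is `tr(T T†) = tr(T† T) = rank T`, because `T† T = 1` when `T` has full column rank.
-/

theorem Matrix.exists_mul_eq_one_of_rank_eq {m n K : Type*} [Fintype m] [DecidableEq m]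
    [Fintype n] [Field K] (A : Matrix m n K) (hA : A.rank = Fintype.card m) :
    ∃ B : Matrix n m K, A * B = 1 := by
  refine mulVec_surjective_iff_exists_right_inverse.mp ?_
  change Function.Surjective A.mulVecLin
  rw [← LinearMap.range_eq_top]
  apply Submodule.eq_top_of_finrank_eq
  rw [← Matrix.rank, hA, Module.finrank_fintype_fun_eq_card]

namespace IsMPInv

variable {m n : Type*} [Fintype m] [Fintype n] {A : Matrix m n ℝ} {B : Matrix n m ℝ}

theorem isSymm_mul (h : IsMPInv A B) : (A * B).IsSymm := h.2.2.1

theorem isIdempotentElem_mul (h : IsMPInv A B) : IsIdempotentElem (A * B) := by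
  rw [IsIdempotentElem, ← Matrix.mul_assoc, h.1]

theorem mul_eq_one_of_mul_eq_one [DecidableEq n] (h : IsMPInv A B) {L : Matrix n m ℝ}
    (hL : L * A = 1) : B * A = 1 :=
  calc B * A = L * A * (B * A) := by rw [hL, Matrix.one_mul]
    _ = L * (A * B * A) := by simp only [Matrix.mul_assoc]
    _ = 1 := by rw [h.1, hL]

/-- `A A†` is the orthogonal projection onto the column space of `A`, and the hypotheses say
that `Q` is one too. -/
theorem mul_eq_of_isSymm_of_mul_eq (h : IsMPInv A B) {Q : Matrix m m ℝ} (hQ : Q.IsSymm)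
    (hQA : Q * A = A) {U : Matrix n m ℝ} (hU : A * U = Q) : A * B = Q := by
  have hQAB : Q * (A * B) = A * B := by rw [← Matrix.mul_assoc, hQA]
  have hABQ : A * B * Q = A * B := by
    simpa only [transpose_mul, h.isSymm_mul.eq, hQ.eq] using congrArg transpose hQAB
  calc A * B = A * B * Q := hABQ.symm
    _ = Q := by rw [← hU, ← Matrix.mul_assoc, h.1]

end IsMPInv

theorem sq_dotProduct_eq_sum_sum {ι R : Type*} [Fintype ι] [CommSemiring R] (p x : ι → R) :
    (p ⬝ᵥ x) ^ 2 = ∑ k, ∑ l, p k * p l * (x k * x l) := by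
  rw [sq, dotProduct, Finset.sum_mul_sum]
  exact Finset.sum_congr rfl fun k _ => Finset.sum_congr rfl fun l _ => by ring

structure IsWhiteNoise {ι Ω : Type*} [DecidableEq ι] [MeasurableSpace Ω] (μ : Measure Ω)
    (σ2 : ℝ) (ε : Ω → ι → ℝ) : Prop where
  integrable : ∀ i, Integrable (fun ω => ε ω i) μ
  integrable_mul : ∀ i j, Integrable (fun ω => ε ω i * ε ω j) μ
  integral_eq_zero : ∀ i, ∫ ω, ε ω i ∂μ = 0
  integral_mul : ∀ i j, ∫ ω, ε ω i * ε ω j ∂μ = if i = j then σ2 else 0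

namespace IsWhiteNoise

variable {ι Ω : Type*} [Fintype ι] [DecidableEq ι] [MeasurableSpace Ω] {μ : Measure Ω}
  {σ2 : ℝ} {ε : Ω → ι → ℝ}

theorem integrable_dotProduct (hε : IsWhiteNoise μ σ2 ε) (p : ι → ℝ) :
    Integrable (fun ω => p ⬝ᵥ ε ω) μ :=
  integrable_finsetSum _ fun k _ => (hε.integrable k).const_mul (p k)

theorem integral_dotProduct (hε : IsWhiteNoise μ σ2 ε) (p : ι → ℝ) :
    ∫ ω, p ⬝ᵥ ε ω ∂μ = 0 := by
  simp only [dotProduct]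
  rw [integral_finsetSum _ fun k _ => (hε.integrable k).const_mul (p k)]
  simp [integral_const_mul, hε.integral_eq_zero]

theorem integrable_dotProduct_sq (hε : IsWhiteNoise μ σ2 ε) (p : ι → ℝ) :
    Integrable (fun ω => (p ⬝ᵥ ε ω) ^ 2) μ := by
  simp only [sq_dotProduct_eq_sum_sum]
  exact integrable_finsetSum _ fun k _ =>
    integrable_finsetSum _ fun l _ => (hε.integrable_mul k l).const_mul _

theorem integral_dotProduct_sq (hε : IsWhiteNoise μ σ2 ε) (p : ι → ℝ) :
    ∫ ω, (p ⬝ᵥ ε ω) ^ 2 ∂μ = σ2 * (p ⬝ᵥ p) := by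
  simp only [sq_dotProduct_eq_sum_sum]
  rw [integral_finsetSum _ fun k _ =>
    integrable_finsetSum _ fun l _ => (hε.integrable_mul k l).const_mul _]
  simp only [dotProduct, Finset.mul_sum]
  refine Finset.sum_congr rfl fun k _ => ?_
  rw [integral_finsetSum _ fun l _ => (hε.integrable_mul k l).const_mul _]
  simp only [integral_const_mul, hε.integral_mul, mul_ite, mul_zero, Finset.sum_ite_eq,
    Finset.mem_univ, if_true]
  ring

variable [IsProbabilityMeasure μ]

theorem integrable_sq_add_dotProduct (hε : IsWhiteNoise μ σ2 ε) (c : ℝ) (p : ι → ℝ) :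
    Integrable (fun ω => (c + p ⬝ᵥ ε ω) ^ 2) μ := by
  simp only [add_sq]
  exact ((integrable_const _).add ((hε.integrable_dotProduct p).const_mul (2 * c))).add
    (hε.integrable_dotProduct_sq p)

theorem integral_sq_add_dotProduct (hε : IsWhiteNoise μ σ2 ε) (c : ℝ) (p : ι → ℝ) :
    ∫ ω, (c + p ⬝ᵥ ε ω) ^ 2 ∂μ = c ^ 2 + σ2 * (p ⬝ᵥ p) := by
  have hlin := (hε.integrable_dotProduct p).const_mul (2 * c)
  have hconst_lin : Integrable (fun ω => c ^ 2 + 2 * c * p ⬝ᵥ ε ω) μ :=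
    (integrable_const _).add hlin
  simp only [add_sq]
  rw [integral_add hconst_lin (hε.integrable_dotProduct_sq p),
    integral_add (integrable_const _) hlin, integral_const_mul, integral_const,
    hε.integral_dotProduct, hε.integral_dotProduct_sq]
  simp

theorem integral_sum_sq_add_mulVec {κ : Type*} [Fintype κ] (hε : IsWhiteNoise μ σ2 ε)
    (a : κ → ℝ) (P : Matrix κ ι ℝ) :
    ∫ ω, ∑ i, (a i + (P *ᵥ ε ω) i) ^ 2 ∂μ = ∑ i, a i ^ 2 + σ2 * trace (P * Pᵀ) := by
  simp only [mulVec, trace, diag, mul_apply', Finset.mul_sum, ← Finset.sum_add_distrib]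
  rw [integral_finsetSum _ fun i _ => hε.integrable_sq_add_dotProduct (a i) (P i)]
  exact Finset.sum_congr rfl fun i _ => hε.integral_sq_add_dotProduct (a i) (P i)

end IsWhiteNoise

theorem variance_estimator_penalized_block_general
    {n q m : ℕ} {Ω : Type*} [MeasurableSpace Ω]
    (μ : Measure Ω) [IsProbabilityMeasure μ]
    (W : Matrix (Fin n) (Fin q) ℝ) (T : Matrix (Fin n) (Fin m) ℝ)
    (hW : W.rank = n)
    (hT : T.rank = m) (hm0 : 0 < m)
    -- Gauss–Markov model: y = Xβ + ε with X = [W, T] fixed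
    (β : Fin q ⊕ Fin m → ℝ) (σ2 : ℝ)
    (ε : Ω → Fin n → ℝ)
    (hint1 : ∀ i, Integrable (fun ω => ε ω i) μ)
    (hint2 : ∀ i j, Integrable (fun ω => ε ω i * ε ω j) μ)
    (hmean : ∀ i, ∫ ω, ε ω i ∂μ = 0)
    (hcov : ∀ i j, ∫ ω, ε ω i * ε ω j ∂μ = if i = j then σ2 else 0)
    (y : Ω → Fin n → ℝ)
    (hy : ∀ ω, y ω = (Matrix.fromCols W T) *ᵥ β + ε ω)
    -- pseudoinverses `Tp = T†` (so `P_T = T T†`) and `Ap = (P⊥_T W)†`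
    (Tp : Matrix (Fin m) (Fin n) ℝ) (hTp : IsMPInv T Tp)
    (Ap : Matrix (Fin q) (Fin n) ℝ)
    (hAp : IsMPInv (((1 : Matrix (Fin n) (Fin n) ℝ) - T * Tp) * W) Ap)
    -- β̂_W = (P⊥_T W)† y
    (βW : Ω → Fin q → ℝ) (hβW : ∀ ω, βW ω = Ap *ᵥ y ω) :
    -- E[σ̂²_W] = σ² + ‖P_T E[y]‖₂² / rank(T), with
    -- σ̂²_W = ‖y − P⊥_T W β̂_W‖₂² / rank(T) and E[y] = Xβ
    ∫ ω, (∑ i, (y ω i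
        - (((((1 : Matrix (Fin n) (Fin n) ℝ) - T * Tp) * W) *ᵥ βW ω)) i) ^ 2)
          / (T.rank : ℝ) ∂μ
      = σ2 + (∑ i, (((T * Tp) *ᵥ ((Matrix.fromCols W T) *ᵥ β)) i) ^ 2)
          / (T.rank : ℝ) := by
  have hε : IsWhiteNoise μ σ2 ε := ⟨hint1, hint2, hmean, hcov⟩
  obtain ⟨R, hWR⟩ := W.exists_mul_eq_one_of_rank_eq (by simpa using hW)
  obtain ⟨L, hTL⟩ := Tᵀ.exists_mul_eq_one_of_rank_eq (by simpa [rank_transpose] using hT)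
  have hTpT : Tp * T = 1 :=
    hTp.mul_eq_one_of_mul_eq_one (by simpa using congrArg transpose hTL)
  have hproj : (1 - T * Tp) * W * Ap = 1 - T * Tp :=
    hAp.mul_eq_of_isSymm_of_mul_eq (isSymm_one.sub hTp.isSymm_mul)
      (by rw [← Matrix.mul_assoc, hTp.isIdempotentElem_mul.one_sub.eq])
      (by rw [Matrix.mul_assoc, hWR, Matrix.mul_one])
  have hres : ∀ ω, y ω - ((1 - T * Tp) * W) *ᵥ βW ω
      = (T * Tp) *ᵥ (fromCols W T *ᵥ β) + (T * Tp) *ᵥ ε ω := fun ω => by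
    rw [hβW, mulVec_mulVec, hproj, sub_mulVec, one_mulVec, sub_sub_cancel, hy, mulVec_add]
  have htrace : trace (T * Tp * (T * Tp)ᵀ) = m := by
    rw [hTp.isSymm_mul.eq, hTp.isIdempotentElem_mul.eq, trace_mul_comm, hTpT, trace_one,
      Fintype.card_fin]
  simp only [← Pi.sub_apply, hres, Pi.add_apply]
  rw [integral_div, hε.integral_sum_sq_add_mulVec, htrace, hT]
  field_simp
  ring

theorem variance_estimator_penalized_block
    {n q m : ℕ} {Ω : Type*} [MeasurableSpace Ω]
    (μ : Measure Ω) [IsProbabilityMeasure μ]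
    (W : Matrix (Fin n) (Fin q) ℝ) (T : Matrix (Fin n) (Fin m) ℝ)
    (hW : W.rank = n) (hnq : n < q)
    (hT : T.rank = m) (hm0 : 0 < m) (hmn : m < n)
    -- Gauss–Markov model: y = Xβ + ε with X = [W, T] fixed
    (β : Fin q ⊕ Fin m → ℝ) (σ2 : ℝ) (hσ2 : 0 ≤ σ2)
    (ε : Ω → Fin n → ℝ)
    (hint1 : ∀ i, Integrable (fun ω => ε ω i) μ)
    (hint2 : ∀ i j, Integrable (fun ω => ε ω i * ε ω j) μ)
    (hmean : ∀ i, ∫ ω, ε ω i ∂μ = 0)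
    (hcov : ∀ i j, ∫ ω, ε ω i * ε ω j ∂μ = if i = j then σ2 else 0)
    (y : Ω → Fin n → ℝ)
    (hy : ∀ ω, y ω = (Matrix.fromCols W T) *ᵥ β + ε ω)
    -- pseudoinverses `Tp = T†` (so `P_T = T T†`) and `Ap = (P⊥_T W)†`
    (Tp : Matrix (Fin m) (Fin n) ℝ) (hTp : IsMPInv T Tp)
    (Ap : Matrix (Fin q) (Fin n) ℝ)
    (hAp : IsMPInv (((1 : Matrix (Fin n) (Fin n) ℝ) - T * Tp) * W) Ap)
    -- β̂_W = (P⊥_T W)† y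
    (βW : Ω → Fin q → ℝ) (hβW : ∀ ω, βW ω = Ap *ᵥ y ω) :
    -- E[σ̂²_W] = σ² + ‖P_T E[y]‖₂² / rank(T), with
    -- σ̂²_W = ‖y − P⊥_T W β̂_W‖₂² / rank(T) and E[y] = Xβ
    ∫ ω, (∑ i, (y ω i
        - (((((1 : Matrix (Fin n) (Fin n) ℝ) - T * Tp) * W) *ᵥ βW ω)) i) ^ 2)
          / (T.rank : ℝ) ∂μ
      = σ2 + (∑ i, (((T * Tp) *ᵥ ((Matrix.fromCols W T) *ᵥ β)) i) ^ 2)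
          / (T.rank : ℝ) :=
  variance_estimator_penalized_block_general μ W T hW hT hm0 β σ2 ε hint1 hint2 hmean hcov y hy Tp
    hTp Ap hAp βW hβW
end
end
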